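/- Let R be a ring, A a right ideal of R, and (A_1, …, A_n) an n-tuple of proper right ideals of R with A_iA_j = A_jA_i for every i, j = 1, …, n. Then the following are equivalent: (1) A = A_1⋯A_n and the family {A_1, …, A_n} is coindependent; (2) the assignment r + A ↦ (r + A_1, …, r + A_n), for r ∈ R, is a well-defined bijective right R-module homomorphism R/A → R/A_1 ⊕ ⋯ ⊕ R/A_n. -/

import Mathlib

open MulOpposite

universe u

/-- The product `A·B` of two right ideals of `R` (right ideals are `Rᵐᵒᵖ`-submodules of `R`):
the set of all finite sums of products `a * b` with `a ∈ A`, `b ∈ B`. -/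
def rmul {R : Type u} [Ring R] (A B : Submodule Rᵐᵒᵖ R) : Submodule Rᵐᵒᵖ R :=
  Submodule.span Rᵐᵒᵖ {x : R | ∃ a ∈ A, ∃ b ∈ B, x = a * b}

/-- The product `A₁⋯Aₙ` of a (possibly empty) list of right ideals. -/
def rprod {R : Type u} [Ring R] : List (Submodule Rᵐᵒᵖ R) → Submodule Rᵐᵒᵖ R
  | [] => ⊤
  | [A] => A
  | A :: l => rmul A (rprod l)

/-- A finite family of right ideals is coindependent if `Aᵢ + ⋂_{j ≠ i} Aⱼ = R` for every `i`. -/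
def Coindep {R : Type u} [Ring R] {n : ℕ} (A : Fin n → Submodule Rᵐᵒᵖ R) : Prop :=
  ∀ i, A i ⊔ (⨅ j, ⨅ (_ : j ≠ i), A j) = ⊤

/-- A module is uniserial if its submodules are linearly ordered by inclusion. -/
def IsUniserialMod (S : Type*) [Ring S] (M : Type*) [AddCommGroup M] [Module S M] : Prop :=
  ∀ N P : Submodule S M, N ≤ P ∨ P ≤ N

/-- A right ideal is a two-sided ideal if it is also closed under left multiplication. -/
def IsTwoSidedRid {R : Type u} [Ring R] (A : Submodule Rᵐᵒᵖ R) : Prop :=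
  ∀ (r : R), ∀ x ∈ A, r * x ∈ A

/-- A serial factorization of a right ideal `A`: a factorization `A = A₁⋯Aₙ` into proper
right ideals that pairwise commute, form a coindependent family, and are such that every
quotient `R/Aᵢ` is a uniserial right `R`-module. -/
def IsSerialFact {R : Type u} [Ring R] {n : ℕ} (A : Submodule Rᵐᵒᵖ R)
    (F : Fin n → Submodule Rᵐᵒᵖ R) : Prop :=
  (∀ i, F i ≠ ⊤) ∧ (∀ i j, rmul (F i) (F j) = rmul (F j) (F i)) ∧ Coindep F ∧
    (∀ i, IsUniserialMod Rᵐᵒᵖ (R ⧸ F i)) ∧ A = rprod (List.ofFn F)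

/-- A right ideal has a serial factorization if it admits one of some length. -/
def HasSerialFact {R : Type u} [Ring R] (A : Submodule Rᵐᵒᵖ R) : Prop :=
  ∃ (n : ℕ) (F : Fin n → Submodule Rᵐᵒᵖ R), IsSerialFact A F

/-- A right chain ring: its right ideals are linearly ordered by inclusion. -/
def IsRightChainRing (R : Type u) [Ring R] : Prop :=
  ∀ A B : Submodule Rᵐᵒᵖ R, A ≤ B ∨ B ≤ A

/-- A ring is right duo if every right ideal is a two-sided ideal. -/
def IsRightDuo (R : Type u) [Ring R] : Prop :=
  ∀ A : Submodule Rᵐᵒᵖ R, IsTwoSidedRid A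

/-- The principal right ideal `rR`. -/
def rspan {R : Type u} [Ring R] (r : R) : Submodule Rᵐᵒᵖ R :=
  Submodule.span Rᵐᵒᵖ ({r} : Set R)

/-! The map `r ↦ (r + Aᵢ)ᵢ` has kernel `⋂ Aᵢ`, and, by the Chinese remainder argument (which works
in any module), it is onto exactly when the family is coindependent. So the induced map
`R/A → ∏ R/Aᵢ` is well defined and bijective iff `A = ⋂ Aᵢ` and the family is coindependent.
Finally, a coindependent family of pairwise commuting right ideals has `A₁⋯Aₙ = ⋂ Aᵢ`: if
`A + B = R` and `AB = BA`, then writing `1 = a + b` gives `x = ax + bx ∈ AB` for `x ∈ A ∩ B`, and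
one inducts on `n`, `A₁` commuting with `A₂⋯Aₙ`. -/

namespace Submodule

variable {S M : Type*} [Ring S] [AddCommGroup M] [Module S M]

theorem surjective_pi_mkQ_iff {ι : Type*} [Fintype ι] (F : ι → Submodule S M) :
    Function.Surjective (LinearMap.pi fun i => (F i).mkQ) ↔
      ∀ i, F i ⊔ ⨅ j, ⨅ (_ : j ≠ i), F j = ⊤ := by
  classical
  constructor
  · intro hsurj i
    refine eq_top_iff'.mpr fun m => ?_
    obtain ⟨x, hx⟩ := hsurj (Pi.single i ((F i).mkQ m))
    have hxj (j : ι) := congrFun hx j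
    simp only [LinearMap.pi_apply, mkQ_apply] at hxj
    refine mem_sup.mpr ⟨m - x, ?_, x, ?_, sub_add_cancel m x⟩
    · simpa using (F i).neg_mem ((Quotient.eq _).mp (by simpa using hxj i))
    · refine mem_iInf _ |>.mpr fun j => mem_iInf _ |>.mpr fun hj => ?_
      simpa [Pi.single_apply, hj] using hxj j
  · intro hco y
    choose m hm using fun i => Quotient.mk_surjective (F i) (y i)
    choose a ha x hx hax using fun i => mem_sup.mp ((hco i).symm ▸ mem_top : m i ∈ _)
    refine ⟨∑ j, x j, funext fun i => ?_⟩
    rw [LinearMap.pi_apply, mkQ_apply, ← hm i, Quotient.eq]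
    have hsplit : ∑ j, x j - m i = ∑ j ∈ Finset.univ.erase i, x j - a i := by
      rw [← hax i, ← Finset.add_sum_erase _ _ (Finset.mem_univ i)]
      abel
    rw [hsplit]
    refine sub_mem (sum_mem fun j hj => ?_) (ha i)
    exact mem_iInf _ |>.mp (mem_iInf _ |>.mp (hx j) i) (Finset.ne_of_mem_erase hj).symm

variable {N : Type*} [AddCommGroup N] [Module S N]

theorem exists_bijective_mk_iff (A : Submodule S M) (π : M →ₗ[S] N) :
    (∃ f : (M ⧸ A) →ₗ[S] N, Function.Bijective f ∧ ∀ m, f (Quotient.mk m) = π m) ↔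
      LinearMap.ker π = A ∧ Function.Surjective π := by
  constructor
  · rintro ⟨f, hf, hfπ⟩
    obtain rfl : f ∘ₗ A.mkQ = π := LinearMap.ext hfπ
    refine ⟨?_, hf.2.comp A.mkQ_surjective⟩
    rw [LinearMap.ker_comp, LinearMap.ker_eq_bot.mpr hf.1, comap_bot, ker_mkQ]
  · rintro ⟨hker, hsurj⟩
    refine ⟨A.liftQ π hker.ge, ⟨?_, ?_⟩, fun m => rfl⟩
    · exact LinearMap.ker_eq_bot.mp (ker_liftQ_eq_bot' _ _ hker.symm)
    · intro y
      obtain ⟨m, rfl⟩ := hsurj y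
      exact ⟨Quotient.mk m, rfl⟩

end Submodule

theorem iInf_fin_succ {α : Type*} [CompleteLattice α] {n : ℕ} (f : Fin (n + 1) → α) :
    ⨅ i, f i = f 0 ⊓ ⨅ i : Fin n, f i.succ :=
  le_antisymm (le_inf (iInf_le f 0) (le_iInf fun i => iInf_le f i.succ))
    (le_iInf fun i => i.cases inf_le_left fun j => inf_le_right.trans (iInf_le _ j))

section RightIdeal

variable {R : Type u} [Ring R]

theorem mul_mem_of_mem_left {A : Submodule Rᵐᵒᵖ R} {a : R} (b : R) (ha : a ∈ A) : a * b ∈ A :=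
  A.smul_mem (op b) ha

theorem mul_mem_rmul {A B : Submodule Rᵐᵒᵖ R} {a b : R} (ha : a ∈ A) (hb : b ∈ B) :
    a * b ∈ rmul A B :=
  Submodule.subset_span ⟨a, ha, b, hb, rfl⟩

theorem rmul_le {A B T : Submodule Rᵐᵒᵖ R} (h : ∀ a ∈ A, ∀ b ∈ B, a * b ∈ T) :
    rmul A B ≤ T := by
  rw [rmul, Submodule.span_le]
  rintro _ ⟨a, ha, b, hb, rfl⟩
  exact h a ha b hb

/-- No right-multiplication case is needed since `(a * b) * r = a * (b * r)`. -/
@[elab_as_elim]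
theorem rmul_induction {A B : Submodule Rᵐᵒᵖ R} {p : R → Prop} (zero : p 0)
    (add : ∀ x y, p x → p y → p (x + y)) (mul : ∀ a ∈ A, ∀ b ∈ B, p (a * b))
    {x : R} (hx : x ∈ rmul A B) : p x := by
  induction hx using Submodule.closure_induction with
  | zero => exact zero
  | add x y _ _ hx hy => exact add x y hx hy
  | smul_mem r _ h =>
    obtain ⟨a, ha, b, hb, rfl⟩ := h
    rw [MulOpposite.smul_eq_mul_unop, mul_assoc]
    exact mul a ha _ (mul_mem_of_mem_left _ hb)

theorem rmul_le_left (A B : Submodule Rᵐᵒᵖ R) : rmul A B ≤ A :=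
  rmul_le fun _ ha b _ => mul_mem_of_mem_left b ha

theorem rmul_assoc (A B C : Submodule Rᵐᵒᵖ R) :
    rmul (rmul A B) C = rmul A (rmul B C) := by
  apply le_antisymm
  · refine rmul_le fun x hx c hc => ?_
    refine rmul_induction (by simp) (fun x y hx hy => ?_) (fun a ha b hb => ?_) hx
    · rw [add_mul]; exact add_mem hx hy
    · rw [mul_assoc]; exact mul_mem_rmul ha (mul_mem_rmul hb hc)
  · refine rmul_le fun a ha x hx => ?_
    refine rmul_induction (by simp) (fun x y hx hy => ?_) (fun b hb c hc => ?_) hx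
    · rw [mul_add]; exact add_mem hx hy
    · rw [← mul_assoc]; exact mul_mem_rmul (mul_mem_rmul ha hb) hc

theorem inf_eq_rmul_of_sup_eq_top {A B : Submodule Rᵐᵒᵖ R} (hsup : A ⊔ B = ⊤)
    (hcomm : rmul A B = rmul B A) : A ⊓ B = rmul A B := by
  refine le_antisymm (fun x hx => ?_) (le_inf (rmul_le_left A B) (hcomm ▸ rmul_le_left B A))
  obtain ⟨a, ha, b, hb, hab⟩ := Submodule.mem_sup.mp (hsup ▸ Submodule.mem_top : (1 : R) ∈ A ⊔ B)
  have hx_eq : x = a * x + b * x := by rw [← add_mul, hab, one_mul]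
  rw [hx_eq]
  exact add_mem (mul_mem_rmul ha hx.2) (hcomm ▸ mul_mem_rmul hb hx.1)

theorem rmul_rprod_cons_comm {B C : Submodule Rᵐᵒᵖ R} {l : List (Submodule Rᵐᵒᵖ R)}
    (h : ∀ D ∈ C :: l, rmul B D = rmul D B) :
    rmul B (rprod (C :: l)) = rmul (rprod (C :: l)) B := by
  induction l generalizing C with
  | nil => exact h C List.mem_cons_self
  | cons D l ih =>
    change rmul B (rmul C (rprod (D :: l))) = rmul (rmul C (rprod (D :: l))) B
    rw [← rmul_assoc, h C List.mem_cons_self, rmul_assoc, ih fun E hE => h E (.tail _ hE),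
      rmul_assoc]

theorem rprod_cons_eq_inf {A : Submodule Rᵐᵒᵖ R} {l : List (Submodule Rᵐᵒᵖ R)}
    (hcomm : ∀ B ∈ l, rmul A B = rmul B A) (hsup : A ⊔ rprod l = ⊤) :
    rprod (A :: l) = A ⊓ rprod l := by
  cases l with
  | nil => exact (inf_top_eq A).symm
  | cons B l => exact (inf_eq_rmul_of_sup_eq_top hsup (rmul_rprod_cons_comm hcomm)).symm

end RightIdeal

section Coindep

variable {R : Type u} [Ring R] {n : ℕ}

theorem Coindep.tail {F : Fin (n + 1) → Submodule Rᵐᵒᵖ R} (h : Coindep F) :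
    Coindep fun i : Fin n => F i.succ := by
  intro i
  have hi := h i.succ
  rw [eq_top_iff] at hi ⊢
  refine hi.trans (sup_le_sup_left (le_iInf₂ fun j hj => ?_) _)
  have hne : j.succ ≠ i.succ := (Fin.succ_injective n).ne hj
  exact iInf₂_le j.succ hne

theorem Coindep.sup_iInf_succ_eq_top {F : Fin (n + 1) → Submodule Rᵐᵒᵖ R} (h : Coindep F) :
    F 0 ⊔ ⨅ i : Fin n, F i.succ = ⊤ := by
  have h0 := h 0
  rw [eq_top_iff] at h0 ⊢
  refine h0.trans (sup_le_sup_left (le_iInf fun j => ?_) _)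
  have hne : j.succ ≠ 0 := Fin.succ_ne_zero j
  exact iInf₂_le j.succ hne

theorem rprod_ofFn_eq_iInf {F : Fin n → Submodule Rᵐᵒᵖ R}
    (hcomm : ∀ i j, rmul (F i) (F j) = rmul (F j) (F i)) (hco : Coindep F) :
    rprod (List.ofFn F) = ⨅ i, F i := by
  induction n with
  | zero => exact (iInf_of_empty F).symm
  | succ n ih =>
    have htail := ih (fun i j => hcomm i.succ j.succ) hco.tail
    rw [List.ofFn_succ, iInf_fin_succ, rprod_cons_eq_inf, htail]
    · intro B hB
      obtain ⟨j, rfl⟩ := List.mem_ofFn.mp hB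
      exact hcomm 0 j.succ
    · rw [htail]
      exact hco.sup_iInf_succ_eq_top

end Coindep

theorem statement3_general {R : Type u} [Ring R] {n : ℕ}
    (A : Submodule Rᵐᵒᵖ R) (F : Fin n → Submodule Rᵐᵒᵖ R)
    (hcomm : ∀ i j, rmul (F i) (F j) = rmul (F j) (F i)) :
    (A = rprod (List.ofFn F) ∧ Coindep F) ↔
      ∃ f : (R ⧸ A) →ₗ[Rᵐᵒᵖ] ((i : Fin n) → R ⧸ F i),
        Function.Bijective f ∧
          ∀ r : R, f (Submodule.Quotient.mk r) = fun i => Submodule.Quotient.mk r := by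
  refine Iff.trans ?_ (A.exists_bijective_mk_iff (LinearMap.pi fun i => (F i).mkQ)).symm
  rw [LinearMap.ker_pi, Submodule.surjective_pi_mkQ_iff]
  simp_rw [Submodule.ker_mkQ]
  exact and_congr_left fun hco => by rw [rprod_ofFn_eq_iInf hcomm hco, eq_comm]

/-- Proposition 2: for pairwise commuting proper right ideals `A₁, …, Aₙ`, one has
`A = A₁⋯Aₙ` with `{A₁, …, Aₙ}` coindependent iff the assignment
`r + A ↦ (r + A₁, …, r + Aₙ)` is a well-defined bijective right `R`-module homomorphism
`R/A → R/A₁ ⊕ ⋯ ⊕ R/Aₙ`. -/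
theorem statement3 {R : Type u} [Ring R] [Nontrivial R] {n : ℕ}
    (A : Submodule Rᵐᵒᵖ R) (F : Fin n → Submodule Rᵐᵒᵖ R)
    (hproper : ∀ i, F i ≠ ⊤)
    (hcomm : ∀ i j, rmul (F i) (F j) = rmul (F j) (F i)) :
    (A = rprod (List.ofFn F) ∧ Coindep F) ↔
      ∃ f : (R ⧸ A) →ₗ[Rᵐᵒᵖ] ((i : Fin n) → R ⧸ F i),
        Function.Bijective f ∧
          ∀ r : R, f (Submodule.Quotient.mk r) = fun i => Submodule.Quotient.mk r :=
  statement3_general A F hcomm
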